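/- arXiv:1910.06206 — 2 statements merged into one kernel-verified Lean document; each statement's English description precedes it below -/
import Mathlib

section
/- There is no tiling of the unit square by exactly 5 axis-aligned squares. -/
noncomputable section

def Cube {D t : ℕ} (c : Fin t → Fin D → ℝ) (s : Fin t → ℝ) (i : Fin t) :
    Set (Fin D → ℝ) :=
  Set.Icc (c i) (fun d => c i d + s i)

/-- `IsTiling D t L c s` : the `t` axis-aligned closed hypercubes with corners `c i` and
side lengths `s i` have pairwise disjoint interiors and union the cube `[0,L]^D`. -/
def IsTiling (D t : ℕ) (L : ℝ) (c : Fin t → Fin D → ℝ) (s : Fin t → ℝ) : Prop :=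
  (∀ i, 0 < s i) ∧
  (∀ i j, i ≠ j → Disjoint (interior (Cube c s i)) (interior (Cube c s j))) ∧
  (⋃ i, Cube c s i) = Set.Icc (0 : Fin D → ℝ) (fun _ => L)

/-- `t` is `D`-admissible: the unit hypercube can be tiled by exactly `t` subcubes. -/
def Admissible (D t : ℕ) : Prop := ∃ c s, IsTiling D t 1 c s

/-!
The tiles meeting a side of the unit square have sides summing to `1` (their projections tile
that side), and no tile meets two opposite sides. So if two opposite sides were each met by at
most two tiles, Cauchy–Schwarz would give these at most four tiles total area at least `1`, leaving
no room for a fifth. Hence some horizontal side `H` and some vertical side `V` are each met by at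
least three tiles. Only one tile contains the corner `H ∩ V`, so at least five tiles meet `H ∪ V`;
the tile at the opposite corner meets neither, making six.
-/

open MeasureTheory Set Finset

section ConvexPieces

variable {E ι : Type*} [NormedAddCommGroup E] [NormedSpace ℝ E] [MeasurableSpace E]
  [BorelSpace E] [FiniteDimensional ℝ E] (μ : Measure E) [μ.IsAddHaarMeasure]

theorem Convex.aedisjoint_of_disjoint_interior {K K' : Set E} (hK : Convex ℝ K)
    (hK' : Convex ℝ K') (h : Disjoint (interior K) (interior K')) : AEDisjoint μ K K' := by
  refine measure_mono_null (t := frontier K ∪ frontier K') ?_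
    (measure_union_null (hK.addHaar_frontier μ) (hK'.addHaar_frontier μ))
  rintro x ⟨hx, hx'⟩
  by_cases hint : x ∈ interior K
  · exact Or.inr ⟨subset_closure hx', Set.disjoint_left.1 h hint⟩
  · exact Or.inl ⟨subset_closure hx, hint⟩

theorem measure_biUnion_finset_of_convex {K : ι → Set E} {S : Finset ι}
    (hconv : ∀ i ∈ S, Convex ℝ (K i))
    (hdisj : (S : Set ι).PairwiseDisjoint fun i => interior (K i)) :
    μ (⋃ i ∈ S, K i) = ∑ i ∈ S, μ (K i) :=
  measure_biUnion_finset₀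
    (fun i hi j hj hij => (hconv i hi).aedisjoint_of_disjoint_interior μ (hconv j hj)
      (hdisj hi hj hij))
    fun i hi => (hconv i hi).nullMeasurableSet μ

end ConvexPieces

section

variable {D t : ℕ} {L : ℝ} {c : Fin t → Fin D → ℝ} {s : Fin t → ℝ}

theorem interior_cube (i : Fin t) :
    interior (Cube c s i) = univ.pi fun d => Ioo (c i d) (c i d + s i) := by
  rw [Cube, ← pi_univ_Icc, interior_pi_set finite_univ]
  simp only [interior_Icc]

open Classical in
def tilesMeeting (c : Fin t → Fin D → ℝ) (s : Fin t → ℝ) (d : Fin D) (v : ℝ) : Finset (Fin t) :=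
  univ.filter fun i => v ∈ Icc (c i d) (c i d + s i)

theorem mem_tilesMeeting {i : Fin t} {d : Fin D} {v : ℝ} :
    i ∈ tilesMeeting c s d v ↔ v ∈ Icc (c i d) (c i d + s i) := by
  simp [tilesMeeting]

namespace IsTiling

theorem cube_subset (h : IsTiling D t L c s) (i : Fin t) : Cube c s i ⊆ Icc 0 fun _ => L :=
  h.2.2 ▸ subset_iUnion _ i

theorem corner_nonneg (h : IsTiling D t L c s) (i : Fin t) (d : Fin D) : 0 ≤ c i d :=
  (h.cube_subset i (left_mem_Icc.2 fun _ => le_add_of_nonneg_right (h.1 i).le)).1 d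

theorem corner_add_side_le (h : IsTiling D t L c s) (i : Fin t) (d : Fin D) :
    c i d + s i ≤ L :=
  (h.cube_subset i (right_mem_Icc.2 fun _ => le_add_of_nonneg_right (h.1 i).le)).2 d

theorem size_pos [NeZero D] (h : IsTiling D t L c s) (i : Fin t) : 0 < L := by
  linarith [h.1 i, h.corner_nonneg i 0, h.corner_add_side_le i 0]

theorem eq_of_forall_nonempty_Ioo_inter (h : IsTiling D t L c s) {i j : Fin t}
    (hij : ∀ d, (Ioo (c i d) (c i d + s i) ∩ Ioo (c j d) (c j d + s j)).Nonempty) : i = j := by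
  by_contra hne
  refine Set.not_disjoint_iff_nonempty_inter.2 ?_ (h.2.1 i j hne)
  rw [interior_cube, interior_cube, ← pi_inter_distrib]
  exact univ_pi_nonempty_iff.2 hij

theorem sum_pow (h : IsTiling D t L c s) (hL : 0 ≤ L) : ∑ i, s i ^ D = L ^ D := by
  have hvol := measure_biUnion_finset_of_convex volume (S := univ) (K := Cube c s)
    (fun i _ => convex_Icc _ _) fun i _ j _ hij => h.2.1 i j hij
  simp only [Finset.mem_univ, iUnion_true] at hvol
  rw [h.2.2] at hvol
  simp only [Cube, Real.volume_Icc_pi, add_sub_cancel_left, Pi.zero_apply, sub_zero, prod_const,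
    card_univ, Fintype.card_fin] at hvol
  simp only [← ENNReal.ofReal_pow hL, ← ENNReal.ofReal_pow (h.1 _).le] at hvol
  rw [← ENNReal.ofReal_sum_of_nonneg fun i _ => pow_nonneg (h.1 i).le D,
    ENNReal.ofReal_eq_ofReal_iff (pow_nonneg hL D) (sum_nonneg fun i _ => pow_nonneg (h.1 i).le D)]
    at hvol
  exact hvol.symm

theorem side_lt [NeZero D] (h : IsTiling D t L c s) (ht : 1 < t) (i : Fin t) : s i < L := by
  have : Nontrivial (Fin t) := Fin.nontrivial_iff_two_le.2 ht
  obtain ⟨j, hji⟩ := exists_ne i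
  have hL := (h.size_pos i).le
  have hlt : s i ^ D < L ^ D := calc
    s i ^ D < s i ^ D + s j ^ D := lt_add_of_pos_right _ (pow_pos (h.1 j) D)
    _ = ∑ k ∈ {i, j}, s k ^ D := (sum_pair (f := fun k => s k ^ D) hji.symm).symm
    _ ≤ ∑ k, s k ^ D :=
      sum_le_sum_of_subset_of_nonneg (subset_univ _) fun k _ _ => pow_nonneg (h.1 k).le D
    _ = L ^ D := h.sum_pow hL
  exact (pow_lt_pow_iff_left₀ (h.1 i).le hL (NeZero.ne D)).1 hlt

theorem disjoint_tilesMeeting_zero_size [NeZero D] (h : IsTiling D t L c s) (ht : 1 < t)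
    (d : Fin D) : Disjoint (tilesMeeting c s d 0) (tilesMeeting c s d L) := by
  refine Finset.disjoint_left.2 fun i h0 hL => ?_
  rw [mem_tilesMeeting] at h0 hL
  linarith [h0.1, hL.2, h.corner_nonneg i d, h.side_lt ht i]

theorem notMem_tilesMeeting_sub [NeZero D] (h : IsTiling D t L c s) (ht : 1 < t) {i : Fin t}
    {d : Fin D} {v : ℝ} (hv : v = 0 ∨ v = L) (hi : i ∈ tilesMeeting c s d v) :
    i ∉ tilesMeeting c s d (L - v) := by
  rcases hv with rfl | rfl
  · rw [sub_zero]
    exact Finset.disjoint_left.1 (h.disjoint_tilesMeeting_zero_size ht d) hi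
  · rw [sub_self]
    exact Finset.disjoint_right.1 (h.disjoint_tilesMeeting_zero_size ht d) hi

theorem exists_forall_mem_tilesMeeting (h : IsTiling D t L c s) {p : Fin D → ℝ}
    (hp : ∀ d, p d ∈ Icc 0 L) : ∃ i, ∀ d, i ∈ tilesMeeting c s d (p d) := by
  have hp' : p ∈ ⋃ i, Cube c s i := h.2.2 ▸ ⟨fun d => (hp d).1, fun d => (hp d).2⟩
  obtain ⟨i, hi⟩ := mem_iUnion.1 hp'
  exact ⟨i, fun d => mem_tilesMeeting.2 ⟨hi.1 d, hi.2 d⟩⟩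

theorem nonempty_Ioo_inter_of_mem_tilesMeeting (h : IsTiling D t L c s) {i j : Fin t}
    {d : Fin D} {v : ℝ} (hv : v = 0 ∨ v = L) (hi : i ∈ tilesMeeting c s d v)
    (hj : j ∈ tilesMeeting c s d v) :
    (Ioo (c i d) (c i d + s i) ∩ Ioo (c j d) (c j d + s j)).Nonempty := by
  rw [mem_tilesMeeting] at hi hj
  rw [Ioo_inter_Ioo, Set.nonempty_Ioo, max_lt_iff, lt_min_iff, lt_min_iff]
  rcases hv with rfl | rfl <;> refine ⟨⟨?_, ?_⟩, ?_, ?_⟩ <;>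
    linarith [hi.1, hi.2, hj.1, hj.2, h.1 i, h.1 j, h.corner_nonneg i d, h.corner_nonneg j d,
      h.corner_add_side_le i d, h.corner_add_side_le j d]

theorem eq_of_forall_mem_tilesMeeting (h : IsTiling D t L c s) {p : Fin D → ℝ}
    (hp : ∀ d, p d = 0 ∨ p d = L) {i j : Fin t} (hi : ∀ d, i ∈ tilesMeeting c s d (p d))
    (hj : ∀ d, j ∈ tilesMeeting c s d (p d)) : i = j :=
  h.eq_of_forall_nonempty_Ioo_inter fun d =>
    h.nonempty_Ioo_inter_of_mem_tilesMeeting (hp d) (hi d) (hj d)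

end IsTiling

end

namespace IsTiling

variable {t : ℕ} {L : ℝ} {c : Fin t → Fin 2 → ℝ} {s : Fin t → ℝ}

theorem sum_side_tilesMeeting (h : IsTiling 2 t L c s) (hL : 0 ≤ L) (d : Fin 2) {v : ℝ}
    (hv : v = 0 ∨ v = L) : ∑ i ∈ tilesMeeting c s d v, s i = L := by
  obtain ⟨d', hd'⟩ := exists_ne d
  have hfin : ∀ k, k = d ∨ k = d' := by
    revert d d'
    decide
  set I : Fin t → Set ℝ := fun i => Icc (c i d') (c i d' + s i)
  have hcover : ⋃ i ∈ tilesMeeting c s d v, I i = Icc 0 L := by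
    refine Subset.antisymm (iUnion₂_subset fun i _ =>
      Icc_subset_Icc (h.corner_nonneg i d') (h.corner_add_side_le i d')) fun x hx => ?_
    have hvL : v ∈ Icc 0 L := by
      rcases hv with rfl | rfl <;> simp [hx.1.trans hx.2]
    obtain ⟨i, hi⟩ := h.exists_forall_mem_tilesMeeting (p := Function.update (fun _ => x) d v)
      fun k => by rcases hfin k with rfl | rfl <;> simp [hvL, hx, hd']
    refine mem_iUnion₂.2 ⟨i, by simpa using hi d, ?_⟩
    simpa [I, hd', mem_tilesMeeting] using hi d'
  have hdisj : (tilesMeeting c s d v : Set (Fin t)).PairwiseDisjoint fun i => interior (I i) := by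
    intro i hi j hj hij
    rw [Function.onFun, interior_Icc, interior_Icc, Set.disjoint_iff_inter_eq_empty,
      ← Set.not_nonempty_iff_eq_empty]
    intro hne
    refine hij (h.eq_of_forall_nonempty_Ioo_inter fun k => ?_)
    rcases hfin k with rfl | rfl
    · exact h.nonempty_Ioo_inter_of_mem_tilesMeeting hv hi hj
    · exact hne
  have hvol := measure_biUnion_finset_of_convex volume (fun i _ => convex_Icc _ _) hdisj
  simp only [hcover, I, Real.volume_Icc, add_sub_cancel_left, sub_zero] at hvol
  rw [← ENNReal.ofReal_sum_of_nonneg fun i _ => (h.1 i).le,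
    ENNReal.ofReal_eq_ofReal_iff hL (sum_nonneg fun i _ => (h.1 i).le)] at hvol
  exact hvol.symm

theorem exists_three_le_card_tilesMeeting (h : IsTiling 2 t L c s) (ht : 4 < t) (d : Fin 2) :
    ∃ v, (v = 0 ∨ v = L) ∧ 3 ≤ #(tilesMeeting c s d v) := by
  by_contra! hcard
  have hL := (h.size_pos ⟨0, by omega⟩).le
  have hside (v : ℝ) (hv : v = 0 ∨ v = L) : L ^ 2 ≤ 2 * ∑ i ∈ tilesMeeting c s d v, s i ^ 2 :=
    calc L ^ 2 = (∑ i ∈ tilesMeeting c s d v, s i) ^ 2 := by rw [h.sum_side_tilesMeeting hL d hv]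
      _ ≤ #(tilesMeeting c s d v) * ∑ i ∈ tilesMeeting c s d v, s i ^ 2 :=
        sq_sum_le_card_mul_sum_sq
      _ ≤ 2 * ∑ i ∈ tilesMeeting c s d v, s i ^ 2 :=
        mul_le_mul_of_nonneg_right (by exact_mod_cast Nat.le_of_lt_succ (hcard v hv))
          (sum_nonneg fun i _ => sq_nonneg _)
  have hdisj := h.disjoint_tilesMeeting_zero_size (by omega) d
  have hcover : Finset.univ ⊆ tilesMeeting c s d 0 ∪ tilesMeeting c s d L := by
    intro i _
    by_contra hi
    have := sum_lt_sum_of_subset (subset_univ _) (mem_univ i) hi (pow_pos (h.1 i) 2)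
      fun j _ _ => sq_nonneg (s j)
    rw [sum_union hdisj, h.sum_pow hL] at this
    linarith [hside 0 (Or.inl rfl), hside L (Or.inr rfl)]
  have := Finset.card_le_card hcover
  rw [card_union_of_disjoint hdisj, card_univ, Fintype.card_fin] at this
  have := hcard 0 (Or.inl rfl)
  have := hcard L (Or.inr rfl)
  omega

theorem card_tilesMeeting_inter_le_one (h : IsTiling 2 t L c s) {v₀ v₁ : ℝ}
    (hv₀ : v₀ = 0 ∨ v₀ = L) (hv₁ : v₁ = 0 ∨ v₁ = L) :
    #(tilesMeeting c s 0 v₀ ∩ tilesMeeting c s 1 v₁) ≤ 1 :=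
  card_le_one.2 fun _ hi _ hj =>
    h.eq_of_forall_mem_tilesMeeting (p := ![v₀, v₁]) (Fin.forall_fin_two.2 ⟨hv₀, hv₁⟩)
      (Fin.forall_fin_two.2 (mem_inter.1 hi)) (Fin.forall_fin_two.2 (mem_inter.1 hj))

theorem exists_notMem_tilesMeeting_union (h : IsTiling 2 t L c s) (ht : 1 < t) {v₀ v₁ : ℝ}
    (hv₀ : v₀ = 0 ∨ v₀ = L) (hv₁ : v₁ = 0 ∨ v₁ = L) :
    ∃ z, z ∉ tilesMeeting c s 0 v₀ ∪ tilesMeeting c s 1 v₁ := by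
  have hL := (h.size_pos ⟨0, by omega⟩).le
  have hopp {v : ℝ} (hv : v = 0 ∨ v = L) : L - v ∈ Icc 0 L := by
    rcases hv with rfl | rfl <;> simp [hL]
  obtain ⟨z, hz⟩ := h.exists_forall_mem_tilesMeeting (p := ![L - v₀, L - v₁])
    (Fin.forall_fin_two.2 ⟨hopp hv₀, hopp hv₁⟩)
  refine ⟨z, Finset.notMem_union.2 ⟨fun hz₀ => ?_, fun hz₁ => ?_⟩⟩
  · exact h.notMem_tilesMeeting_sub ht hv₀ hz₀ (hz 0)
  · exact h.notMem_tilesMeeting_sub ht hv₁ hz₁ (hz 1)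

end IsTiling

theorem stmt4 : ¬ Admissible 2 5 := by
  rintro ⟨c, s, h⟩
  obtain ⟨v₀, hv₀, hV⟩ := h.exists_three_le_card_tilesMeeting (by norm_num : 4 < 5) 0
  obtain ⟨v₁, hv₁, hH⟩ := h.exists_three_le_card_tilesMeeting (by norm_num : 4 < 5) 1
  obtain ⟨z, hz⟩ := h.exists_notMem_tilesMeeting_union (by norm_num : 1 < 5) hv₀ hv₁
  have hlt := card_lt_univ_of_notMem hz
  have hunion := card_union_add_card_inter (tilesMeeting c s 0 v₀) (tilesMeeting c s 1 v₁)
  have hinter := h.card_tilesMeeting_inter_le_one hv₀ hv₁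
  rw [Fintype.card_fin] at hlt
  omega
end
end

section
/- The cube of side 9 can be tiled by one cube of side 5, three cubes of side 4, seven cubes of side 3, twenty-two cubes of side 2, and forty-seven unit cubes; in particular 9^3 = 5^3 + 3·4^3 + 7·3^3 + 22·2^3 + 47. -/
noncomputable section

/-!
The tiling is given explicitly. Its corners and sides are integers, so checking it is a finite
computation: a family of integer cubes inside `[0,L]^D` tiles it as soon as every unit cell
`v + [0,1]^D`, `v ∈ {0,…,L-1}^D`, lies in exactly one of the cubes. Interiors are then disjoint
because a common interior point `x` puts the cell `⌊x⌋` in both cubes, and the union is everything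
because every point of `[0,L]^D` lies in some unit cell.
-/

open Set

section IntegerCubes

variable {D t : ℕ}

theorem mem_interior_cube_iff {c : Fin t → Fin D → ℝ} {s : Fin t → ℝ} {i : Fin t}
    {x : Fin D → ℝ} : x ∈ interior (Cube c s i) ↔ ∀ d, x d ∈ Ioo (c i d) (c i d + s i) := by
  rw [Cube, ← pi_univ_Icc, interior_pi_set finite_univ]
  simp only [interior_Icc, mem_pi, mem_univ, true_implies]

theorem Nat.floor_mem_Ico_of_mem_Ioo {R : Type*} [Semiring R] [LinearOrder R]
    [IsStrictOrderedRing R] [FloorSemiring R] {a b : ℕ} {x : R} (hx : x ∈ Ioo (a : R) b) :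
    ⌊x⌋₊ ∈ Ico a b :=
  ⟨Nat.le_floor hx.1.le, (Nat.floor_lt (a.cast_nonneg.trans hx.1.le)).2 hx.2⟩

theorem exists_nat_lt_mem_Icc_add_one {L : ℕ} (hL : 0 < L) {x : ℝ} (hx : x ∈ Icc 0 (L : ℝ)) :
    ∃ v : ℕ, v < L ∧ x ∈ Icc (v : ℝ) (v + 1) := by
  rcases hx.2.lt_or_eq with hlt | rfl
  · exact ⟨⌊x⌋₊, (Nat.floor_lt hx.1).2 hlt, Nat.floor_le hx.1, (Nat.lt_floor_add_one x).le⟩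
  · refine ⟨L - 1, Nat.sub_lt hL one_pos, ?_⟩
    rw [Nat.cast_pred hL]
    constructor <;> linarith

/-- Cube `i` contains the unit cell `v + [0,1]^D`. -/
def CoversCell (c : Fin t → Fin D → ℕ) (s : Fin t → ℕ) (i : Fin t) (v : Fin D → ℕ) : Prop :=
  ∀ d, c i d ≤ v d ∧ v d < c i d + s i

instance (c : Fin t → Fin D → ℕ) (s : Fin t → ℕ) (i : Fin t) (v : Fin D → ℕ) :
    Decidable (CoversCell c s i v) := by
  unfold CoversCell; infer_instance

variable {c : Fin t → Fin D → ℕ} {s : Fin t → ℕ} {i : Fin t}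

theorem coversCell_floor_of_mem_interior {x : Fin D → ℝ}
    (hx : x ∈ interior (Cube (fun i d => (c i d : ℝ)) (fun i => (s i : ℝ)) i)) :
    CoversCell c s i (fun d => ⌊x d⌋₊) := fun d =>
  Nat.floor_mem_Ico_of_mem_Ioo (by exact_mod_cast mem_interior_cube_iff.1 hx d)

theorem mem_cube_of_coversCell {v : Fin D → ℕ} (hv : CoversCell c s i v) {x : Fin D → ℝ}
    (hx : ∀ d, x d ∈ Icc (v d : ℝ) (v d + 1)) :
    x ∈ Cube (fun i d => (c i d : ℝ)) (fun i => (s i : ℝ)) i := by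
  refine ⟨fun d => (Nat.cast_le.2 (hv d).1).trans (hx d).1, fun d => (hx d).2.trans ?_⟩
  show (v d : ℝ) + 1 ≤ c i d + s i
  exact_mod_cast (hv d).2

theorem isTiling_of_existsUnique_coversCell {L : ℕ} (hL : 0 < L) (hs : ∀ i, 0 < s i)
    (hle : ∀ i d, c i d + s i ≤ L)
    (hcell : ∀ v : Fin D → ℕ, (∀ d, v d < L) → ∃! i, CoversCell c s i v) :
    IsTiling D t L (fun i d => (c i d : ℝ)) (fun i => (s i : ℝ)) := by
  refine ⟨fun i => Nat.cast_pos.2 (hs i), fun i j hij => ?_, ?_⟩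
  · refine disjoint_left.2 fun x hxi hxj => hij ?_
    have hi := coversCell_floor_of_mem_interior hxi
    have hj := coversCell_floor_of_mem_interior hxj
    have hlt : ∀ d, ⌊x d⌋₊ < L := fun d => (hi d).2.trans_le (hle i d)
    exact (hcell _ hlt).unique hi hj
  · ext x
    simp only [mem_iUnion]
    constructor
    · rintro ⟨i, hx⟩
      refine ⟨fun d => ?_, fun d => ?_⟩
      · exact (Nat.cast_nonneg (c i d)).trans (hx.1 d)
      · refine (hx.2 d).trans ?_
        show (c i d : ℝ) + s i ≤ L
        exact_mod_cast hle i d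
    · intro hx
      choose v hvL hxv using fun d => exists_nat_lt_mem_Icc_add_one hL ⟨hx.1 d, hx.2 d⟩
      obtain ⟨i, hi, -⟩ := hcell v hvL
      exact ⟨i, mem_cube_of_coversCell hi hxv⟩

end IntegerCubes

theorem natCard_natCast_eq_card_filter {ι : Type*} [Fintype ι] (s : ι → ℕ) (k : ℕ) :
    Nat.card {i // (s i : ℝ) = k} = (Finset.univ.filter (s · = k)).card := by
  simp only [Nat.cast_inj, Nat.card_eq_fintype_card, Fintype.card_subtype]

/-- The tiling of `[0,9]^3`: each entry is `(x, y, z, side)`, where `(x, y, z)` is the corner of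
the cube nearest the origin. -/
def cubes : Fin 80 → ℕ × ℕ × ℕ × ℕ := ![(0,0,0,5),(5,0,0,4),(0,5,0,4),(0,0,5,4),(0,4,6,3),(3,4,6,3),(4,6,0,3),(4,6,3,3),(6,0,4,3),(6,3,6,3),(6,6,6,3),(0,5,4,2),(0,7,4,2),(0,7,6,2),(2,5,4,2),(2,7,4,2),(2,7,6,2),(4,0,5,2),(4,0,7,2),(4,2,5,2),(4,2,7,2),(4,7,6,2),(5,4,0,2),(5,4,2,2),(5,4,4,2),(6,0,7,2),(7,3,4,2),(7,4,0,2),(7,4,2,2),(7,5,4,2),(7,6,0,2),(7,6,2,2),(7,7,4,2),(4,5,0,1),(7,8,0,1),(8,8,0,1),(4,5,1,1),(7,8,1,1),(8,8,1,1),(4,5,2,1),(7,8,2,1),(8,8,2,1),(4,5,3,1),(7,8,3,1),(8,8,3,1),(5,0,4,1),(5,1,4,1),(5,2,4,1),(5,3,4,1),(6,3,4,1),(4,5,4,1),(6,3,5,1),(0,4,5,1),(1,4,5,1),(2,4,5,1),(3,4,5,1),(4,4,5,1),(4,5,5,1),(8,0,7,1),(8,1,7,1),(6,2,7,1),(7,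2,7,1),(8,2,7,1),(8,0,8,1),(8,1,8,1),(6,2,8,1),(7,2,8,1),(8,2,8,1),(0,7,8,1),(1,7,8,1),(2,7,8,1),(3,7,8,1),(4,7,8,1),(5,7,8,1),(0,8,8,1),(1,8,8,1),(2,8,8,1),(3,8,8,1),(4,8,8,1),(5,8,8,1)]

def corner (i : Fin 80) : Fin 3 → ℕ := ![(cubes i).1, (cubes i).2.1, (cubes i).2.2.1]

def side (i : Fin 80) : ℕ := (cubes i).2.2.2

theorem side_pos : ∀ i, 0 < side i := by decide

theorem corner_add_side_le : ∀ i d, corner i d + side i ≤ 9 := by decide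

theorem card_coversCell (x y z : Fin 9) :
    (Finset.univ.filter (CoversCell corner side · ![x, y, z])).card = 1 := by
  -- unfolding the cell test first makes the kernel evaluation several times cheaper
  simp only [CoversCell, Fin.forall_fin_succ, IsEmpty.forall_iff, and_true, Fin.succ_zero_eq_one,
    Fin.succ_one_eq_two, Matrix.cons_val_zero, Matrix.cons_val_one, Matrix.cons_val_two]
  revert x y z
  decide +kernel

theorem existsUnique_coversCell (v : Fin 3 → ℕ) (hv : ∀ d, v d < 9) :
    ∃! i, CoversCell corner side i v := by
  have hv' : v = ![v 0, v 1, v 2] := by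
    funext d; fin_cases d <;> rfl
  rw [Fintype.existsUnique_iff_card_one, hv']
  exact card_coversCell ⟨v 0, hv 0⟩ ⟨v 1, hv 1⟩ ⟨v 2, hv 2⟩

theorem isTiling_cubes :
    IsTiling 3 80 9 (fun i d => (corner i d : ℝ)) (fun i => (side i : ℝ)) := by
  exact_mod_cast isTiling_of_existsUnique_coversCell (by norm_num) side_pos corner_add_side_le
    existsUnique_coversCell

theorem stmt17 :
    (9 ^ 3 = 5 ^ 3 + 3 * 4 ^ 3 + 7 * 3 ^ 3 + 22 * 2 ^ 3 + 47) ∧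
    ∃ (c : Fin 80 → Fin 3 → ℝ) (s : Fin 80 → ℝ), IsTiling 3 80 9 c s ∧
      Nat.card {i : Fin 80 // s i = 5} = 1 ∧
      Nat.card {i : Fin 80 // s i = 4} = 3 ∧
      Nat.card {i : Fin 80 // s i = 3} = 7 ∧
      Nat.card {i : Fin 80 // s i = 2} = 22 ∧
      Nat.card {i : Fin 80 // s i = 1} = 47 := by
  refine ⟨by norm_num, _, _, isTiling_cubes, ?_, ?_, ?_, ?_, ?_⟩ <;>
    exact_mod_cast (natCard_natCast_eq_card_filter side _).trans (by decide +kernel)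
end
end
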